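/- arXiv:1508.05428 — 5 statements merged into one kernel-verified Lean document; each statement's English description precedes it below -/
import Mathlib

section
/- In K_6 there is no set of 15 distinct triangles covering every edge exactly three times, no cover of 3K_6 by 15 distinct triangles exists; equivalently, the complement of a 5-triangle cover of 1K_6 inside the set of all 20 triangles would be such, and since no 5-triangle exact cover exists, no 15-triangle triple cover exists. -/
lemma edge_in_four : ∀ e : Finset (Fin 6), e.card = 2 →
    ((Finset.univ.filter (fun t : Finset (Fin 6) => t.card = 3)).filter
      (fun t => e ⊆ t)).card = 4 := by decide

lemma tri_count : ∀ t : Finset (Fin 6), t.card = 3 →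
    ((Finset.univ.erase (0 : Fin 6)).filter
      (fun w => ({0, w} : Finset (Fin 6)) ⊆ t)).card =
    (if (0 : Fin 6) ∈ t then 2 else 0) := by decide

/-- In `K₆` there is no set of 15 distinct triangles covering every
edge exactly three times.  Equivalently, for a set `T` of triangles, `T` covers
`3K₆` if and only if its complement inside the set of all 20 triangles (each
edge lying in exactly 4 triangles in total) covers `1K₆` — and since no
5-triangle exact cover exists, no 15-triangle triple cover exists. -/
theorem no_fifteen_triangle_triple_cover :
    (¬ ∃ T : Finset (Finset (Fin 6)),
      (∀ t ∈ T, t.card = 3) ∧ T.card = 15 ∧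
      (∀ e : Finset (Fin 6), e.card = 2 →
        (T.filter (fun t => e ⊆ t)).card = 3)) ∧
    (∀ T : Finset (Finset (Fin 6)),
      T ⊆ (Finset.univ.filter (fun t : Finset (Fin 6) => t.card = 3)) →
      ((∀ e : Finset (Fin 6), e.card = 2 →
          (T.filter (fun t => e ⊆ t)).card = 3) ↔
       (∀ e : Finset (Fin 6), e.card = 2 →
          (((Finset.univ.filter (fun t : Finset (Fin 6) => t.card = 3)) \ T).filter
            (fun t => e ⊆ t)).card = 1))) := by
  constructor
  · rintro ⟨T, hT3, -, hcov⟩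
    -- double count pairs (edge at 0, triangle in T containing it)
    set E := Finset.univ.erase (0 : Fin 6) with hE
    have key : ∑ w ∈ E, (T.filter (fun t => ({0, w} : Finset (Fin 6)) ⊆ t)).card
        = ∑ t ∈ T, ((E.filter (fun w => ({0, w} : Finset (Fin 6)) ⊆ t))).card := by
      simp only [Finset.card_filter]
      rw [Finset.sum_comm]
    have hL : ∑ w ∈ E, (T.filter (fun t => ({0, w} : Finset (Fin 6)) ⊆ t)).card = 15 := by
      have : ∀ w ∈ E, (T.filter (fun t => ({0, w} : Finset (Fin 6)) ⊆ t)).card = 3 := by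
        intro w hw
        apply hcov
        rw [Finset.card_insert_of_notMem (by
          simp only [Finset.mem_singleton]
          exact fun h => (Finset.mem_erase.mp hw).1 h.symm), Finset.card_singleton]
      rw [Finset.sum_congr rfl this]
      decide
    have hR : ∑ t ∈ T, ((E.filter (fun w => ({0, w} : Finset (Fin 6)) ⊆ t))).card
        = 2 * (T.filter (fun t => (0 : Fin 6) ∈ t)).card := by
      have : ∀ t ∈ T, ((E.filter (fun w => ({0, w} : Finset (Fin 6)) ⊆ t))).card
          = (if (0 : Fin 6) ∈ t then 2 else 0) := fun t ht => tri_count t (hT3 t ht)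
      rw [Finset.sum_congr rfl this, ← Finset.sum_filter, Finset.sum_const, smul_eq_mul,
        mul_comm]
    omega
  · intro T hT
    have hsub : ∀ e : Finset (Fin 6),
        ((Finset.univ.filter (fun t : Finset (Fin 6) => t.card = 3)) \ T).filter
            (fun t => e ⊆ t)
          = ((Finset.univ.filter (fun t : Finset (Fin 6) => t.card = 3)).filter
              (fun t => e ⊆ t)) \ (T.filter (fun t => e ⊆ t)) := by
      intro e
      ext t
      simp only [Finset.mem_filter, Finset.mem_sdiff]
      tauto
    have hle : ∀ e : Finset (Fin 6),
        (T.filter (fun t => e ⊆ t)) ⊆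
          ((Finset.univ.filter (fun t : Finset (Fin 6) => t.card = 3)).filter
            (fun t => e ⊆ t)) :=
      fun e => Finset.filter_subset_filter _ hT
    have hcard : ∀ e : Finset (Fin 6), e.card = 2 →
        (((Finset.univ.filter (fun t : Finset (Fin 6) => t.card = 3)) \ T).filter
            (fun t => e ⊆ t)).card = 4 - (T.filter (fun t => e ⊆ t)).card := by
      intro e he
      rw [hsub e, Finset.card_sdiff_of_subset (hle e), edge_in_four e he]
    constructor
    · intro h e he
      rw [hcard e he, h e he]
    · intro h e he
      have h1 := hcard e he
      have h2 := h e he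
      have h3 : (T.filter (fun t => e ⊆ t)).card ≤ 4 := by
        rw [← edge_in_four e he]; exact Finset.card_le_card (hle e)
      omega
end

section
/- If α is an element of S_6 of cycle type (3,3), written α = ab with a, b disjoint 3-cycles, then the 3-cycles c such that α·c is a 3-cycle are exactly a⁻¹ and b⁻¹. -/
/-!
A fixed point of both `c` and `σ * c` is a fixed point of `σ`, so the supports of the 3-cycles
`c` and `σ * c` cover the six points moved by `σ = a * b`; hence they are disjoint. For `x` moved
by `c` this gives `σ (c x) = x`, i.e. `c` agrees with `σ⁻¹` on its support, so the cycle `c` is a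
cycle factor of `σ⁻¹ = a⁻¹ * b⁻¹`, namely `a⁻¹` or `b⁻¹`.
-/

open Finset Equiv.Perm

namespace Equiv.Perm

variable {α : Type*} [DecidableEq α] [Fintype α]

theorem support_subset_support_mul_union_support (σ c : Perm α) :
    σ.support ⊆ (σ * c).support ∪ c.support := by
  simpa using support_mul_le (σ * c) c⁻¹

theorem disjoint_support_mul_of_card_support_add_le {σ c : Perm α}
    (h : #c.support + #(σ * c).support ≤ #σ.support) :
    _root_.Disjoint c.support (σ * c).support := by
  rw [← card_union_eq_card_add_card]
  refine le_antisymm (card_union_le _ _) (h.trans (card_le_card ?_))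
  rw [union_comm]
  exact support_subset_support_mul_union_support σ c

theorem mem_cycleFactorsFinset_inv_of_disjoint_support_mul {σ c : Perm α} (hc : c.IsCycle)
    (h : _root_.Disjoint c.support (σ * c).support) : c ∈ σ⁻¹.cycleFactorsFinset := by
  refine mem_cycleFactorsFinset_iff.2 ⟨hc, fun x hx => ?_⟩
  have hfix : σ (c x) = x := notMem_support.1 (disjoint_left.1 h hx)
  exact eq_inv_iff_eq.2 hfix

theorem Disjoint.cycleFactorsFinset_inv_mul {a b : Perm α} (ha : a.IsCycle) (hb : b.IsCycle)
    (hab : a.Disjoint b) : ((a * b)⁻¹).cycleFactorsFinset = {a⁻¹, b⁻¹} := by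
  rw [hab.commute.eq, mul_inv_rev, (hab.inv_left.inv_right).cycleFactorsFinset_mul_eq_union,
    ha.inv.cycleFactorsFinset_eq_singleton, hb.inv.cycleFactorsFinset_eq_singleton, ← insert_eq]

end Equiv.Perm

/-- If `α` is an element of `S₆` of cycle type `(3,3)`, written
`α = a·b` with `a, b` disjoint 3-cycles, then the 3-cycles `c` such that `α·c`
is a 3-cycle are exactly `a⁻¹` and `b⁻¹`. -/
theorem three_cycles_giving_three_cycle_with_type_33
    (a b : Equiv.Perm (Fin 6))
    (ha : a.IsThreeCycle) (hb : b.IsThreeCycle) (hdisj : a.Disjoint b)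
    (c : Equiv.Perm (Fin 6)) :
    (c.IsThreeCycle ∧ ((a * b) * c).IsThreeCycle) ↔ (c = a⁻¹ ∨ c = b⁻¹) := by
  constructor
  · rintro ⟨hc, habc⟩
    have hcard : #c.support + #(a * b * c).support ≤ #(a * b).support := by
      rw [hdisj.card_support_mul, hc.card_support, habc.card_support, ha.card_support,
        hb.card_support]
    have hmem := mem_cycleFactorsFinset_inv_of_disjoint_support_mul hc.isCycle
      (disjoint_support_mul_of_card_support_add_le hcard)
    rw [hdisj.cycleFactorsFinset_inv_mul ha.isCycle hb.isCycle] at hmem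
    simpa using hmem
  · rintro (rfl | rfl)
    · refine ⟨ha.inv, ?_⟩
      rwa [hdisj.commute.eq, mul_inv_cancel_right]
    · exact ⟨hb.inv, by rwa [mul_inv_cancel_right]⟩
end

section
/- For a 6-cycle σ in S_6, there are exactly six elements α of cycle type (4,1,1) such that σ·α is a 3-cycle. -/
set_option maxRecDepth 20000

lemma cycleType_eq_four_iff (β : Equiv.Perm (Fin 6)) :
    β.cycleType = {4} ↔ β.support.card = 4 ∧ ¬ (β * β = 1) := by
  constructor
  · intro h
    refine ⟨by rw [← Equiv.Perm.sum_cycleType, h]; rfl, ?_⟩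
    intro h1
    have ho : orderOf β = 4 := by
      rw [← Equiv.Perm.lcm_cycleType, h]; rfl
    have hd : orderOf β ∣ 2 := orderOf_dvd_of_pow_eq_one (by rw [pow_two]; exact h1)
    rw [ho] at hd
    omega
  · rintro ⟨h4, h2⟩
    have hsum : β.cycleType.sum = 4 := by rw [Equiv.Perm.sum_cycleType, h4]
    have hne : β.cycleType ≠ 0 := by
      intro h; rw [h] at hsum; simp at hsum
    obtain ⟨a, ha⟩ := Multiset.exists_mem_of_ne_zero hne
    have ha2 : 2 ≤ a := Equiv.Perm.two_le_of_mem_cycleType ha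
    obtain ⟨t, ht⟩ := Multiset.exists_cons_of_mem ha
    have hts : a + t.sum = 4 := by rw [ht, Multiset.sum_cons] at hsum; exact hsum
    by_cases h0 : t = 0
    · have : a = 4 := by rw [h0] at hts; simpa using hts
      rw [ht, h0, this]; rfl
    · exfalso
      obtain ⟨b, hb⟩ := Multiset.exists_mem_of_ne_zero h0
      have hb2 : 2 ≤ b := Equiv.Perm.two_le_of_mem_cycleType (by rw [ht]; exact Multiset.mem_cons_of_mem hb)
      obtain ⟨u, hu⟩ := Multiset.exists_cons_of_mem hb
      have hus : a + (b + u.sum) = 4 := by rw [hu, Multiset.sum_cons] at hts; exact hts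
      have ha2' : a = 2 := by omega
      have hb2' : b = 2 := by omega
      have hu0 : u = 0 := by
        by_contra hu0
        obtain ⟨c, hc⟩ := Multiset.exists_mem_of_ne_zero hu0
        have hc2 : 2 ≤ c := Equiv.Perm.two_le_of_mem_cycleType
          (by rw [ht, hu]; exact Multiset.mem_cons_of_mem (Multiset.mem_cons_of_mem hc))
        have := Multiset.single_le_sum (fun x _ => Nat.zero_le x) c hc
        omega
      have hct : β.cycleType = {2, 2} := by
        rw [ht, hu, hu0, ha2', hb2']; rfl
      have ho : orderOf β = 2 := by
        rw [← Equiv.Perm.lcm_cycleType, hct]; rfl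
      have : β ^ 2 = 1 := by rw [← ho]; exact pow_orderOf_eq_one β
      rw [pow_two] at this
      exact h2 this

lemma count_finRotate :
    (Finset.univ.filter (fun α : Equiv.Perm (Fin 6) =>
      α.support.card = 4 ∧ ¬(α * α = 1) ∧ ((finRotate 6) * α).support.card = 3)).card = 6 := by
  decide

/-- For a 6-cycle `σ` in `S₆`, there are exactly six elements `α`
of cycle type `(4,1,1)` such that `σ·α` is a 3-cycle. -/
theorem six_cycle_count
    (σ : Equiv.Perm (Fin 6)) (hσ : σ.cycleType = {6}) :
    Nat.card {α : Equiv.Perm (Fin 6) //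
        α.cycleType = ({4} : Multiset ℕ) ∧ (σ * α).IsThreeCycle} = 6 := by
  set c : Equiv.Perm (Fin 6) := finRotate 6 with hc
  have hconj : IsConj c σ := Equiv.Perm.isConj_of_cycleType_eq (by
    rw [hc, cycleType_finRotate_of_le (by norm_num), hσ])
  obtain ⟨τ, hτ⟩ := isConj_iff.mp hconj
  -- hτ : τ * c * τ⁻¹ = σ
  have key : ∀ α : Equiv.Perm (Fin 6),
      (α.cycleType = ({4} : Multiset ℕ) ∧ (σ * α).IsThreeCycle) ↔
      ((τ⁻¹ * α * τ).cycleType = ({4} : Multiset ℕ) ∧ (c * (τ⁻¹ * α * τ)).IsThreeCycle) := by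
    intro α
    have h1 : (τ⁻¹ * α * τ).cycleType = α.cycleType := by
      have := Equiv.Perm.cycleType_conj (σ := α) (τ := τ⁻¹)
      rwa [inv_inv] at this
    have h2 : c * (τ⁻¹ * α * τ) = τ⁻¹ * (σ * α) * τ := by
      rw [← hτ]; group
    have h3 : (c * (τ⁻¹ * α * τ)).cycleType = (σ * α).cycleType := by
      rw [h2]
      have := Equiv.Perm.cycleType_conj (σ := σ * α) (τ := τ⁻¹)
      rwa [inv_inv] at this
    unfold Equiv.Perm.IsThreeCycle
    rw [h1, h3]
  have e : {α : Equiv.Perm (Fin 6) //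
        α.cycleType = ({4} : Multiset ℕ) ∧ (σ * α).IsThreeCycle} ≃
      {α : Equiv.Perm (Fin 6) //
        α.cycleType = ({4} : Multiset ℕ) ∧ (c * α).IsThreeCycle} := by
    refine ⟨fun x => ⟨τ⁻¹ * x.1 * τ, (key x.1).mp x.2⟩,
      fun x => ⟨τ * x.1 * τ⁻¹, ?_⟩, fun x => by ext : 1; simp; group, fun x => by ext : 1; simp; group⟩
    have := (key (τ * x.1 * τ⁻¹)).mpr
    simp only [mul_assoc] at this ⊢
    refine this ?_
    convert x.2 using 3 <;> group
  rw [Nat.card_congr e]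
  have e2 : {α : Equiv.Perm (Fin 6) //
        α.cycleType = ({4} : Multiset ℕ) ∧ (c * α).IsThreeCycle} ≃
      {α : Equiv.Perm (Fin 6) //
        α.support.card = 4 ∧ ¬(α * α = 1) ∧ (c * α).support.card = 3} := by
    apply Equiv.subtypeEquivRight
    intro α
    rw [cycleType_eq_four_iff, ← card_support_eq_three_iff]
    tauto
  rw [Nat.card_congr e2, Nat.card_eq_fintype_card, Fintype.card_subtype]
  exact count_finRotate
end

section
/- The subgroup H = ⟨(1,4)(3,5), (1,4,6,2,5,3)⟩ of S_6 has order 120 and is isomorphic to S_5, and it acts transitively on {1,...,6} (indeed 3-transitively). -/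
set_option maxRecDepth 40000

open Equiv

/-- The subgroup `H = ⟨(1,4)(3,5), (1,4,6,2,5,3)⟩` of `S₆` (0-indexed:
`⟨(0,3)(2,4), (0,3,5,1,4,2)⟩`). -/
def H120 : Subgroup (Equiv.Perm (Fin 6)) :=
  Subgroup.closure
    { swap 0 3 * swap 2 4,
      swap 0 2 * (swap 0 4 * (swap 0 1 * (swap 0 5 * swap 0 3))) }

def pa : Perm (Fin 6) := swap 0 3 * swap 2 4
def pb : Perm (Fin 6) := swap 0 2 * (swap 0 4 * (swap 0 1 * (swap 0 5 * swap 0 3)))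

lemma ha : pa ∈ H120 := Subgroup.subset_closure (Set.mem_insert _ _)
lemma hb : pb ∈ H120 := Subgroup.subset_closure (Set.mem_insert_of_mem _ rfl)

/-- The five matchings forming the exotic 5-point orbit. -/
def M5 : Fin 5 → Perm (Fin 6)
| 0 => swap 0 1 * swap 2 3 * swap 4 5
| 1 => swap 0 2 * swap 1 4 * swap 3 5
| 2 => swap 0 3 * swap 1 5 * swap 2 4
| 3 => swap 0 4 * swap 1 3 * swap 2 5
| 4 => swap 0 5 * swap 1 2 * swap 3 4

def idx5 (g : Perm (Fin 6)) : Fin 5 :=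
  if g = M5 0 then 0 else if g = M5 1 then 1 else if g = M5 2 then 2
  else if g = M5 3 then 3 else 4

def ff (g : Perm (Fin 6)) (i : Fin 5) : Fin 5 := idx5 (g * M5 i * g⁻¹)

def Q (g : Perm (Fin 6)) : Prop := ∀ i : Fin 5, ∃ j : Fin 5, g * M5 i * g⁻¹ = M5 j

lemma M5_inj : Function.Injective M5 := by decide

lemma idx5_M5 : ∀ i : Fin 5, idx5 (M5 i) = i := by decide

lemma Q_apply {g : Perm (Fin 6)} (hg : Q g) (i : Fin 5) :
    M5 (ff g i) = g * M5 i * g⁻¹ := by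
  obtain ⟨j, hj⟩ := hg i
  rw [ff, hj, idx5_M5]

lemma Q_one : Q 1 := fun i => ⟨i, by group⟩

lemma Q_mul {g h : Perm (Fin 6)} (hg : Q g) (hh : Q h) : Q (g * h) :=
  fun i => ⟨ff g (ff h i), by rw [Q_apply hg, Q_apply hh]; group⟩

lemma ff_inj {g : Perm (Fin 6)} (hg : Q g) : Function.Injective (ff g) := by
  intro i j hij
  have h2 := congrArg M5 hij
  rw [Q_apply hg, Q_apply hg] at h2
  exact M5_inj (mul_left_cancel (mul_right_cancel h2))

lemma ff_surj {g : Perm (Fin 6)} (hg : Q g) : Function.Surjective (ff g) :=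
  Finite.surjective_of_injective (ff_inj hg)

lemma Q_inv {g : Perm (Fin 6)} (hg : Q g) : Q g⁻¹ := by
  intro i
  obtain ⟨j, hj⟩ := ff_surj hg i
  exact ⟨j, by rw [← hj, Q_apply hg]; group⟩

lemma Q_of_mem {g : Perm (Fin 6)} (hg : g ∈ H120) : Q g := by
  induction hg using Subgroup.closure_induction with
  | mem x hx =>
      simp only [Set.mem_insert_iff, Set.mem_singleton_iff] at hx
      rcases hx with rfl | rfl
      · exact (by decide : ∀ i : Fin 5, ∃ j : Fin 5, pa * M5 i * pa⁻¹ = M5 j)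
      · exact (by decide : ∀ i : Fin 5, ∃ j : Fin 5, pb * M5 i * pb⁻¹ = M5 j)
  | one => exact Q_one
  | mul x y _ _ hx hy => exact Q_mul hx hy
  | inv x _ hx => exact Q_inv hx

/-- The homomorphism `H120 →* Perm (Fin 5)` given by conjugation on the matchings. -/
def rho : H120 →* Perm (Fin 5) :=
  MonoidHom.mk'
    (fun g => { toFun := ff g
                invFun := ff ((g : Perm (Fin 6))⁻¹)
                left_inv := by
                  intro i
                  have hg := Q_of_mem g.2
                  apply M5_inj
                  rw [Q_apply (Q_inv hg), Q_apply hg]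
                  group
                right_inv := by
                  intro i
                  have hg := Q_of_mem g.2
                  apply M5_inj
                  rw [Q_apply hg, Q_apply (Q_inv hg)]
                  group })
    (by
      intro g h
      apply Equiv.ext
      intro i
      apply M5_inj
      show M5 (ff (↑g * ↑h) i) = M5 (ff ↑g (ff ↑h i))
      rw [Q_apply (Q_mul (Q_of_mem g.2) (Q_of_mem h.2)), Q_apply (Q_of_mem g.2),
        Q_apply (Q_of_mem h.2)]
      group)

lemma rho_apply (g : H120) (i : Fin 5) : rho g i = ff (g : Perm (Fin 6)) i := rfl

lemma cent : ∀ g : Perm (Fin 6), (∀ i : Fin 5, g * M5 i = M5 i * g) → g = 1 := by decide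

lemma rho_inj : Function.Injective rho := by
  rw [injective_iff_map_eq_one]
  intro g hg1
  have hq := Q_of_mem g.2
  have hfix : ∀ i : Fin 5, ff (g : Perm (Fin 6)) i = i := fun i => by
    rw [← rho_apply, hg1]; rfl
  have hc : ∀ i : Fin 5, (g : Perm (Fin 6)) * M5 i = M5 i * (g : Perm (Fin 6)) := by
    intro i
    have h2 := Q_apply hq i
    rw [hfix i] at h2
    calc (g : Perm (Fin 6)) * M5 i
        = ((g : Perm (Fin 6)) * M5 i * (g : Perm (Fin 6))⁻¹) * (g : Perm (Fin 6)) := by group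
      _ = M5 i * (g : Perm (Fin 6)) := by rw [← h2]
  exact Subtype.ext (cent _ hc)

lemma rho_surj : Function.Surjective rho := by
  rw [← MonoidHom.range_eq_top]
  rw [eq_top_iff, ← Equiv.Perm.closure_isSwap, Subgroup.closure_le]
  rintro σ ⟨x, y, hxy, rfl⟩
  show swap x y ∈ rho.range
  fin_cases x <;> fin_cases y
  exacts [(absurd rfl hxy),
    ⟨⟨pa*pb*pa*pb*pb*pb*pa*pb*pb*pb, mul_mem (mul_mem (mul_mem (mul_mem (mul_mem (mul_mem (mul_mem (mul_mem (mul_mem (ha) hb) ha) hb) hb) hb) ha) hb) hb) hb⟩, Equiv.ext (by decide)⟩,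
    ⟨⟨pb*pb*pb*pa*pb*pa*pb*pb*pb*pa, mul_mem (mul_mem (mul_mem (mul_mem (mul_mem (mul_mem (mul_mem (mul_mem (mul_mem (hb) hb) hb) ha) hb) ha) hb) hb) hb) ha⟩, Equiv.ext (by decide)⟩,
    ⟨⟨pa*pb*pb*pb*pa*pb*pb*pb*pa*pb*pb*pb, mul_mem (mul_mem (mul_mem (mul_mem (mul_mem (mul_mem (mul_mem (mul_mem (mul_mem (mul_mem (mul_mem (ha) hb) hb) hb) ha) hb) hb) hb) ha) hb) hb) hb⟩, Equiv.ext (by decide)⟩,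
    ⟨⟨pa*pb*pb*pb*pa*pb*pb*pb*pa*pb, mul_mem (mul_mem (mul_mem (mul_mem (mul_mem (mul_mem (mul_mem (mul_mem (mul_mem (ha) hb) hb) hb) ha) hb) hb) hb) ha) hb⟩, Equiv.ext (by decide)⟩,
    ⟨⟨pa*pb*pa*pb*pb*pb*pa*pb*pb*pb, mul_mem (mul_mem (mul_mem (mul_mem (mul_mem (mul_mem (mul_mem (mul_mem (mul_mem (ha) hb) ha) hb) hb) hb) ha) hb) hb) hb⟩, Equiv.ext (by decide)⟩,
    (absurd rfl hxy),
    ⟨⟨pb*pb*pb, mul_mem (mul_mem (hb) hb) hb⟩, Equiv.ext (by decide)⟩,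
    ⟨⟨pb*pb*pa*pb*pa*pb*pb*pb*pa*pb, mul_mem (mul_mem (mul_mem (mul_mem (mul_mem (mul_mem (mul_mem (mul_mem (mul_mem (hb) hb) ha) hb) ha) hb) hb) hb) ha) hb⟩, Equiv.ext (by decide)⟩,
    ⟨⟨pb*pb*pb*pa*pb*pb*pb*pa*pb*pb*pb, mul_mem (mul_mem (mul_mem (mul_mem (mul_mem (mul_mem (mul_mem (mul_mem (mul_mem (mul_mem (hb) hb) hb) ha) hb) hb) hb) ha) hb) hb) hb⟩, Equiv.ext (by decide)⟩,
    ⟨⟨pb*pb*pb*pa*pb*pa*pb*pb*pb*pa, mul_mem (mul_mem (mul_mem (mul_mem (mul_mem (mul_mem (mul_mem (mul_mem (mul_mem (hb) hb) hb) ha) hb) ha) hb) hb) hb) ha⟩, Equiv.ext (by decide)⟩,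
    ⟨⟨pb*pb*pb, mul_mem (mul_mem (hb) hb) hb⟩, Equiv.ext (by decide)⟩,
    (absurd rfl hxy),
    ⟨⟨pa*pb*pb*pb*pa*pb*pa*pb*pb*pb, mul_mem (mul_mem (mul_mem (mul_mem (mul_mem (mul_mem (mul_mem (mul_mem (mul_mem (ha) hb) hb) hb) ha) hb) ha) hb) hb) hb⟩, Equiv.ext (by decide)⟩,
    ⟨⟨pa*pb*pb*pb*pa, mul_mem (mul_mem (mul_mem (mul_mem (ha) hb) hb) hb) ha⟩, Equiv.ext (by decide)⟩,
    ⟨⟨pa*pb*pb*pb*pa*pb*pb*pb*pa*pb*pb*pb, mul_mem (mul_mem (mul_mem (mul_mem (mul_mem (mul_mem (mul_mem (mul_mem (mul_mem (mul_mem (mul_mem (ha) hb) hb) hb) ha) hb) hb) hb) ha) hb) hb) hb⟩, Equiv.ext (by decide)⟩,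
    ⟨⟨pb*pb*pa*pb*pa*pb*pb*pb*pa*pb, mul_mem (mul_mem (mul_mem (mul_mem (mul_mem (mul_mem (mul_mem (mul_mem (mul_mem (hb) hb) ha) hb) ha) hb) hb) hb) ha) hb⟩, Equiv.ext (by decide)⟩,
    ⟨⟨pa*pb*pb*pb*pa*pb*pa*pb*pb*pb, mul_mem (mul_mem (mul_mem (mul_mem (mul_mem (mul_mem (mul_mem (mul_mem (mul_mem (ha) hb) hb) hb) ha) hb) ha) hb) hb) hb⟩, Equiv.ext (by decide)⟩,
    (absurd rfl hxy),
    ⟨⟨pb*pa*pb*pb*pb*pa*pb*pb*pb*pa, mul_mem (mul_mem (mul_mem (mul_mem (mul_mem (mul_mem (mul_mem (mul_mem (mul_mem (hb) ha) hb) hb) hb) ha) hb) hb) hb) ha⟩, Equiv.ext (by decide)⟩,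
    ⟨⟨pa*pb*pb*pb*pa*pb*pb*pb*pa*pb, mul_mem (mul_mem (mul_mem (mul_mem (mul_mem (mul_mem (mul_mem (mul_mem (mul_mem (ha) hb) hb) hb) ha) hb) hb) hb) ha) hb⟩, Equiv.ext (by decide)⟩,
    ⟨⟨pb*pb*pb*pa*pb*pb*pb*pa*pb*pb*pb, mul_mem (mul_mem (mul_mem (mul_mem (mul_mem (mul_mem (mul_mem (mul_mem (mul_mem (mul_mem (hb) hb) hb) ha) hb) hb) hb) ha) hb) hb) hb⟩, Equiv.ext (by decide)⟩,
    ⟨⟨pa*pb*pb*pb*pa, mul_mem (mul_mem (mul_mem (mul_mem (ha) hb) hb) hb) ha⟩, Equiv.ext (by decide)⟩,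
    ⟨⟨pb*pa*pb*pb*pb*pa*pb*pb*pb*pa, mul_mem (mul_mem (mul_mem (mul_mem (mul_mem (mul_mem (mul_mem (mul_mem (mul_mem (hb) ha) hb) hb) hb) ha) hb) hb) hb) ha⟩, Equiv.ext (by decide)⟩,
    (absurd rfl hxy)]

def L : List (Perm (Fin 6)) := [
  1,
  pa,
  pb,
  pa*pb,
  pb*pa,
  pb*pb,
  pa*pb*pa,
  pa*pb*pb,
  pb*pa*pb,
  pb*pb*pa,
  pb*pb*pb,
  pa*pb*pa*pb,
  pa*pb*pb*pa,
  pa*pb*pb*pb,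
  pb*pa*pb*pa,
  pb*pa*pb*pb,
  pb*pb*pa*pb,
  pb*pb*pb*pa,
  pb*pb*pb*pb,
  pa*pb*pa*pb*pa,
  pa*pb*pa*pb*pb,
  pa*pb*pb*pa*pb,
  pa*pb*pb*pb*pa,
  pa*pb*pb*pb*pb,
  pb*pa*pb*pa*pb,
  pb*pa*pb*pb*pa,
  pb*pa*pb*pb*pb,
  pb*pb*pa*pb*pa,
  pb*pb*pa*pb*pb,
  pb*pb*pb*pa*pb,
  pb*pb*pb*pb*pa,
  pb*pb*pb*pb*pb,
  pa*pb*pa*pb*pa*pb,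
  pa*pb*pa*pb*pb*pa,
  pa*pb*pa*pb*pb*pb,
  pa*pb*pb*pa*pb*pa,
  pa*pb*pb*pb*pa*pb,
  pa*pb*pb*pb*pb*pb,
  pb*pa*pb*pa*pb*pb,
  pb*pa*pb*pb*pb*pa,
  pb*pa*pb*pb*pb*pb,
  pb*pb*pa*pb*pa*pb,
  pb*pb*pa*pb*pb*pb,
  pb*pb*pb*pa*pb*pa,
  pb*pb*pb*pa*pb*pb,
  pb*pb*pb*pb*pa*pb,
  pa*pb*pa*pb*pa*pb*pb,
  pa*pb*pa*pb*pb*pb*pa,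
  pa*pb*pa*pb*pb*pb*pb,
  pa*pb*pb*pa*pb*pa*pb,
  pa*pb*pb*pb*pa*pb*pa,
  pa*pb*pb*pb*pa*pb*pb,
  pb*pa*pb*pa*pb*pb*pa,
  pb*pa*pb*pa*pb*pb*pb,
  pb*pa*pb*pb*pb*pa*pb,
  pb*pa*pb*pb*pb*pb*pb,
  pb*pb*pa*pb*pa*pb*pb,
  pb*pb*pa*pb*pb*pb*pa,
  pb*pb*pa*pb*pb*pb*pb,
  pb*pb*pb*pa*pb*pa*pb,
  pb*pb*pb*pa*pb*pb*pb,
  pb*pb*pb*pb*pa*pb*pa,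
  pb*pb*pb*pb*pa*pb*pb,
  pa*pb*pa*pb*pa*pb*pb*pa,
  pa*pb*pa*pb*pa*pb*pb*pb,
  pa*pb*pa*pb*pb*pb*pa*pb,
  pa*pb*pa*pb*pb*pb*pb*pb,
  pa*pb*pb*pa*pb*pa*pb*pb,
  pa*pb*pb*pb*pa*pb*pa*pb,
  pa*pb*pb*pb*pa*pb*pb*pb,
  pb*pa*pb*pa*pb*pb*pb*pa,
  pb*pa*pb*pa*pb*pb*pb*pb,
  pb*pa*pb*pb*pb*pa*pb*pb,
  pb*pb*pa*pb*pa*pb*pb*pa,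
  pb*pb*pa*pb*pa*pb*pb*pb,
  pb*pb*pa*pb*pb*pb*pa*pb,
  pb*pb*pa*pb*pb*pb*pb*pb,
  pb*pb*pb*pa*pb*pa*pb*pb,
  pb*pb*pb*pa*pb*pb*pb*pa,
  pb*pb*pb*pa*pb*pb*pb*pb,
  pb*pb*pb*pb*pa*pb*pa*pb,
  pb*pb*pb*pb*pa*pb*pb*pb,
  pa*pb*pa*pb*pa*pb*pb*pb*pb,
  pa*pb*pa*pb*pb*pb*pa*pb*pb,
  pa*pb*pb*pa*pb*pa*pb*pb*pa,
  pa*pb*pb*pa*pb*pa*pb*pb*pb,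
  pa*pb*pb*pb*pa*pb*pa*pb*pb,
  pa*pb*pb*pb*pa*pb*pb*pb*pa,
  pb*pa*pb*pa*pb*pb*pb*pa*pb,
  pb*pa*pb*pb*pb*pa*pb*pb*pb,
  pb*pb*pa*pb*pa*pb*pb*pb*pa,
  pb*pb*pa*pb*pa*pb*pb*pb*pb,
  pb*pb*pa*pb*pb*pb*pa*pb*pb,
  pb*pb*pb*pa*pb*pa*pb*pb*pa,
  pb*pb*pb*pa*pb*pa*pb*pb*pb,
  pb*pb*pb*pa*pb*pb*pb*pa*pb,
  pb*pb*pb*pa*pb*pb*pb*pb*pb,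
  pb*pb*pb*pb*pa*pb*pa*pb*pb,
  pa*pb*pa*pb*pb*pb*pa*pb*pb*pb,
  pa*pb*pb*pa*pb*pa*pb*pb*pb*pa,
  pa*pb*pb*pa*pb*pa*pb*pb*pb*pb,
  pa*pb*pb*pb*pa*pb*pa*pb*pb*pa,
  pa*pb*pb*pb*pa*pb*pa*pb*pb*pb,
  pa*pb*pb*pb*pa*pb*pb*pb*pa*pb,
  pb*pa*pb*pb*pb*pa*pb*pb*pb*pa,
  pb*pb*pa*pb*pa*pb*pb*pb*pa*pb,
  pb*pb*pa*pb*pb*pb*pa*pb*pb*pb,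
  pb*pb*pb*pa*pb*pa*pb*pb*pb*pa,
  pb*pb*pb*pa*pb*pa*pb*pb*pb*pb,
  pb*pb*pb*pa*pb*pb*pb*pa*pb*pb,
  pb*pb*pb*pb*pa*pb*pa*pb*pb*pb,
  pa*pb*pa*pb*pb*pb*pa*pb*pb*pb*pa,
  pa*pb*pb*pa*pb*pa*pb*pb*pb*pa*pb,
  pa*pb*pb*pb*pa*pb*pa*pb*pb*pb*pa,
  pa*pb*pb*pb*pa*pb*pa*pb*pb*pb*pb,
  pa*pb*pb*pb*pa*pb*pb*pb*pa*pb*pb,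
  pb*pb*pa*pb*pb*pb*pa*pb*pb*pb*pa,
  pb*pb*pb*pa*pb*pb*pb*pa*pb*pb*pb,
  pb*pb*pb*pb*pa*pb*pa*pb*pb*pb*pa,
  pa*pb*pb*pb*pa*pb*pb*pb*pa*pb*pb*pb]

lemma L_mem : ∀ g ∈ L, g ∈ H120 := by
  intro g hg
  simp only [L, List.mem_cons, List.not_mem_nil, or_false] at hg
  rcases hg with rfl|rfl|rfl|rfl|rfl|rfl|rfl|rfl|rfl|rfl|rfl|rfl|rfl|rfl|rfl|rfl|rfl|rfl|rfl|rfl|rfl|rfl|rfl|rfl|rfl|rfl|rfl|rfl|rfl|rfl|rfl|rfl|rfl|rfl|rfl|rfl|rfl|rfl|rfl|rfl|rfl|rfl|rfl|rfl|rfl|rfl|rfl|rfl|rfl|rfl|rfl|rfl|rfl|rfl|rfl|rfl|rfl|rfl|rfl|rfl|rfl|rfl|rfl|rfl|rfl|rfl|rfl|rfl|rfl|rfl|rfl|rfl|rfl|rfl|rfl|rfl|rfl|rfl|rfl|rfl|rfl|rfl|rfl|rfl|rfl|rfl|rfl|rfl|rfl|rfl|rfl|rfl|rfl|rfl|rfl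|rfl|rfl|rfl|rfl|rfl|rfl|rfl|rfl|rfl|rfl|rfl|rfl|rfl|rfl|rfl|rfl|rfl|rfl|rfl|rfl|rfl|rfl|rfl|rfl|rfl
  exacts [
  one_mem _,
  ha,
  hb,
  mul_mem (ha) hb,
  mul_mem (hb) ha,
  mul_mem (hb) hb,
  mul_mem (mul_mem (ha) hb) ha,
  mul_mem (mul_mem (ha) hb) hb,
  mul_mem (mul_mem (hb) ha) hb,
  mul_mem (mul_mem (hb) hb) ha,
  mul_mem (mul_mem (hb) hb) hb,
  mul_mem (mul_mem (mul_mem (ha) hb) ha) hb,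
  mul_mem (mul_mem (mul_mem (ha) hb) hb) ha,
  mul_mem (mul_mem (mul_mem (ha) hb) hb) hb,
  mul_mem (mul_mem (mul_mem (hb) ha) hb) ha,
  mul_mem (mul_mem (mul_mem (hb) ha) hb) hb,
  mul_mem (mul_mem (mul_mem (hb) hb) ha) hb,
  mul_mem (mul_mem (mul_mem (hb) hb) hb) ha,
  mul_mem (mul_mem (mul_mem (hb) hb) hb) hb,
  mul_mem (mul_mem (mul_mem (mul_mem (ha) hb) ha) hb) ha,
  mul_mem (mul_mem (mul_mem (mul_mem (ha) hb) ha) hb) hb,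
  mul_mem (mul_mem (mul_mem (mul_mem (ha) hb) hb) ha) hb,
  mul_mem (mul_mem (mul_mem (mul_mem (ha) hb) hb) hb) ha,
  mul_mem (mul_mem (mul_mem (mul_mem (ha) hb) hb) hb) hb,
  mul_mem (mul_mem (mul_mem (mul_mem (hb) ha) hb) ha) hb,
  mul_mem (mul_mem (mul_mem (mul_mem (hb) ha) hb) hb) ha,
  mul_mem (mul_mem (mul_mem (mul_mem (hb) ha) hb) hb) hb,
  mul_mem (mul_mem (mul_mem (mul_mem (hb) hb) ha) hb) ha,
  mul_mem (mul_mem (mul_mem (mul_mem (hb) hb) ha) hb) hb,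
  mul_mem (mul_mem (mul_mem (mul_mem (hb) hb) hb) ha) hb,
  mul_mem (mul_mem (mul_mem (mul_mem (hb) hb) hb) hb) ha,
  mul_mem (mul_mem (mul_mem (mul_mem (hb) hb) hb) hb) hb,
  mul_mem (mul_mem (mul_mem (mul_mem (mul_mem (ha) hb) ha) hb) ha) hb,
  mul_mem (mul_mem (mul_mem (mul_mem (mul_mem (ha) hb) ha) hb) hb) ha,
  mul_mem (mul_mem (mul_mem (mul_mem (mul_mem (ha) hb) ha) hb) hb) hb,
  mul_mem (mul_mem (mul_mem (mul_mem (mul_mem (ha) hb) hb) ha) hb) ha,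
  mul_mem (mul_mem (mul_mem (mul_mem (mul_mem (ha) hb) hb) hb) ha) hb,
  mul_mem (mul_mem (mul_mem (mul_mem (mul_mem (ha) hb) hb) hb) hb) hb,
  mul_mem (mul_mem (mul_mem (mul_mem (mul_mem (hb) ha) hb) ha) hb) hb,
  mul_mem (mul_mem (mul_mem (mul_mem (mul_mem (hb) ha) hb) hb) hb) ha,
  mul_mem (mul_mem (mul_mem (mul_mem (mul_mem (hb) ha) hb) hb) hb) hb,
  mul_mem (mul_mem (mul_mem (mul_mem (mul_mem (hb) hb) ha) hb) ha) hb,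
  mul_mem (mul_mem (mul_mem (mul_mem (mul_mem (hb) hb) ha) hb) hb) hb,
  mul_mem (mul_mem (mul_mem (mul_mem (mul_mem (hb) hb) hb) ha) hb) ha,
  mul_mem (mul_mem (mul_mem (mul_mem (mul_mem (hb) hb) hb) ha) hb) hb,
  mul_mem (mul_mem (mul_mem (mul_mem (mul_mem (hb) hb) hb) hb) ha) hb,
  mul_mem (mul_mem (mul_mem (mul_mem (mul_mem (mul_mem (ha) hb) ha) hb) ha) hb) hb,
  mul_mem (mul_mem (mul_mem (mul_mem (mul_mem (mul_mem (ha) hb) ha) hb) hb) hb) ha,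
  mul_mem (mul_mem (mul_mem (mul_mem (mul_mem (mul_mem (ha) hb) ha) hb) hb) hb) hb,
  mul_mem (mul_mem (mul_mem (mul_mem (mul_mem (mul_mem (ha) hb) hb) ha) hb) ha) hb,
  mul_mem (mul_mem (mul_mem (mul_mem (mul_mem (mul_mem (ha) hb) hb) hb) ha) hb) ha,
  mul_mem (mul_mem (mul_mem (mul_mem (mul_mem (mul_mem (ha) hb) hb) hb) ha) hb) hb,
  mul_mem (mul_mem (mul_mem (mul_mem (mul_mem (mul_mem (hb) ha) hb) ha) hb) hb) ha,
  mul_mem (mul_mem (mul_mem (mul_mem (mul_mem (mul_mem (hb) ha) hb) ha) hb) hb) hb,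
  mul_mem (mul_mem (mul_mem (mul_mem (mul_mem (mul_mem (hb) ha) hb) hb) hb) ha) hb,
  mul_mem (mul_mem (mul_mem (mul_mem (mul_mem (mul_mem (hb) ha) hb) hb) hb) hb) hb,
  mul_mem (mul_mem (mul_mem (mul_mem (mul_mem (mul_mem (hb) hb) ha) hb) ha) hb) hb,
  mul_mem (mul_mem (mul_mem (mul_mem (mul_mem (mul_mem (hb) hb) ha) hb) hb) hb) ha,
  mul_mem (mul_mem (mul_mem (mul_mem (mul_mem (mul_mem (hb) hb) ha) hb) hb) hb) hb,
  mul_mem (mul_mem (mul_mem (mul_mem (mul_mem (mul_mem (hb) hb) hb) ha) hb) ha) hb,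
  mul_mem (mul_mem (mul_mem (mul_mem (mul_mem (mul_mem (hb) hb) hb) ha) hb) hb) hb,
  mul_mem (mul_mem (mul_mem (mul_mem (mul_mem (mul_mem (hb) hb) hb) hb) ha) hb) ha,
  mul_mem (mul_mem (mul_mem (mul_mem (mul_mem (mul_mem (hb) hb) hb) hb) ha) hb) hb,
  mul_mem (mul_mem (mul_mem (mul_mem (mul_mem (mul_mem (mul_mem (ha) hb) ha) hb) ha) hb) hb) ha,
  mul_mem (mul_mem (mul_mem (mul_mem (mul_mem (mul_mem (mul_mem (ha) hb) ha) hb) ha) hb) hb) hb,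
  mul_mem (mul_mem (mul_mem (mul_mem (mul_mem (mul_mem (mul_mem (ha) hb) ha) hb) hb) hb) ha) hb,
  mul_mem (mul_mem (mul_mem (mul_mem (mul_mem (mul_mem (mul_mem (ha) hb) ha) hb) hb) hb) hb) hb,
  mul_mem (mul_mem (mul_mem (mul_mem (mul_mem (mul_mem (mul_mem (ha) hb) hb) ha) hb) ha) hb) hb,
  mul_mem (mul_mem (mul_mem (mul_mem (mul_mem (mul_mem (mul_mem (ha) hb) hb) hb) ha) hb) ha) hb,
  mul_mem (mul_mem (mul_mem (mul_mem (mul_mem (mul_mem (mul_mem (ha) hb) hb) hb) ha) hb) hb) hb,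
  mul_mem (mul_mem (mul_mem (mul_mem (mul_mem (mul_mem (mul_mem (hb) ha) hb) ha) hb) hb) hb) ha,
  mul_mem (mul_mem (mul_mem (mul_mem (mul_mem (mul_mem (mul_mem (hb) ha) hb) ha) hb) hb) hb) hb,
  mul_mem (mul_mem (mul_mem (mul_mem (mul_mem (mul_mem (mul_mem (hb) ha) hb) hb) hb) ha) hb) hb,
  mul_mem (mul_mem (mul_mem (mul_mem (mul_mem (mul_mem (mul_mem (hb) hb) ha) hb) ha) hb) hb) ha,
  mul_mem (mul_mem (mul_mem (mul_mem (mul_mem (mul_mem (mul_mem (hb) hb) ha) hb) ha) hb) hb) hb,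
  mul_mem (mul_mem (mul_mem (mul_mem (mul_mem (mul_mem (mul_mem (hb) hb) ha) hb) hb) hb) ha) hb,
  mul_mem (mul_mem (mul_mem (mul_mem (mul_mem (mul_mem (mul_mem (hb) hb) ha) hb) hb) hb) hb) hb,
  mul_mem (mul_mem (mul_mem (mul_mem (mul_mem (mul_mem (mul_mem (hb) hb) hb) ha) hb) ha) hb) hb,
  mul_mem (mul_mem (mul_mem (mul_mem (mul_mem (mul_mem (mul_mem (hb) hb) hb) ha) hb) hb) hb) ha,
  mul_mem (mul_mem (mul_mem (mul_mem (mul_mem (mul_mem (mul_mem (hb) hb) hb) ha) hb) hb) hb) hb,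
  mul_mem (mul_mem (mul_mem (mul_mem (mul_mem (mul_mem (mul_mem (hb) hb) hb) hb) ha) hb) ha) hb,
  mul_mem (mul_mem (mul_mem (mul_mem (mul_mem (mul_mem (mul_mem (hb) hb) hb) hb) ha) hb) hb) hb,
  mul_mem (mul_mem (mul_mem (mul_mem (mul_mem (mul_mem (mul_mem (mul_mem (ha) hb) ha) hb) ha) hb) hb) hb) hb,
  mul_mem (mul_mem (mul_mem (mul_mem (mul_mem (mul_mem (mul_mem (mul_mem (ha) hb) ha) hb) hb) hb) ha) hb) hb,
  mul_mem (mul_mem (mul_mem (mul_mem (mul_mem (mul_mem (mul_mem (mul_mem (ha) hb) hb) ha) hb) ha) hb) hb) ha,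
  mul_mem (mul_mem (mul_mem (mul_mem (mul_mem (mul_mem (mul_mem (mul_mem (ha) hb) hb) ha) hb) ha) hb) hb) hb,
  mul_mem (mul_mem (mul_mem (mul_mem (mul_mem (mul_mem (mul_mem (mul_mem (ha) hb) hb) hb) ha) hb) ha) hb) hb,
  mul_mem (mul_mem (mul_mem (mul_mem (mul_mem (mul_mem (mul_mem (mul_mem (ha) hb) hb) hb) ha) hb) hb) hb) ha,
  mul_mem (mul_mem (mul_mem (mul_mem (mul_mem (mul_mem (mul_mem (mul_mem (hb) ha) hb) ha) hb) hb) hb) ha) hb,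
  mul_mem (mul_mem (mul_mem (mul_mem (mul_mem (mul_mem (mul_mem (mul_mem (hb) ha) hb) hb) hb) ha) hb) hb) hb,
  mul_mem (mul_mem (mul_mem (mul_mem (mul_mem (mul_mem (mul_mem (mul_mem (hb) hb) ha) hb) ha) hb) hb) hb) ha,
  mul_mem (mul_mem (mul_mem (mul_mem (mul_mem (mul_mem (mul_mem (mul_mem (hb) hb) ha) hb) ha) hb) hb) hb) hb,
  mul_mem (mul_mem (mul_mem (mul_mem (mul_mem (mul_mem (mul_mem (mul_mem (hb) hb) ha) hb) hb) hb) ha) hb) hb,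
  mul_mem (mul_mem (mul_mem (mul_mem (mul_mem (mul_mem (mul_mem (mul_mem (hb) hb) hb) ha) hb) ha) hb) hb) ha,
  mul_mem (mul_mem (mul_mem (mul_mem (mul_mem (mul_mem (mul_mem (mul_mem (hb) hb) hb) ha) hb) ha) hb) hb) hb,
  mul_mem (mul_mem (mul_mem (mul_mem (mul_mem (mul_mem (mul_mem (mul_mem (hb) hb) hb) ha) hb) hb) hb) ha) hb,
  mul_mem (mul_mem (mul_mem (mul_mem (mul_mem (mul_mem (mul_mem (mul_mem (hb) hb) hb) ha) hb) hb) hb) hb) hb,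
  mul_mem (mul_mem (mul_mem (mul_mem (mul_mem (mul_mem (mul_mem (mul_mem (hb) hb) hb) hb) ha) hb) ha) hb) hb,
  mul_mem (mul_mem (mul_mem (mul_mem (mul_mem (mul_mem (mul_mem (mul_mem (mul_mem (ha) hb) ha) hb) hb) hb) ha) hb) hb) hb,
  mul_mem (mul_mem (mul_mem (mul_mem (mul_mem (mul_mem (mul_mem (mul_mem (mul_mem (ha) hb) hb) ha) hb) ha) hb) hb) hb) ha,
  mul_mem (mul_mem (mul_mem (mul_mem (mul_mem (mul_mem (mul_mem (mul_mem (mul_mem (ha) hb) hb) ha) hb) ha) hb) hb) hb) hb,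
  mul_mem (mul_mem (mul_mem (mul_mem (mul_mem (mul_mem (mul_mem (mul_mem (mul_mem (ha) hb) hb) hb) ha) hb) ha) hb) hb) ha,
  mul_mem (mul_mem (mul_mem (mul_mem (mul_mem (mul_mem (mul_mem (mul_mem (mul_mem (ha) hb) hb) hb) ha) hb) ha) hb) hb) hb,
  mul_mem (mul_mem (mul_mem (mul_mem (mul_mem (mul_mem (mul_mem (mul_mem (mul_mem (ha) hb) hb) hb) ha) hb) hb) hb) ha) hb,
  mul_mem (mul_mem (mul_mem (mul_mem (mul_mem (mul_mem (mul_mem (mul_mem (mul_mem (hb) ha) hb) hb) hb) ha) hb) hb) hb) ha,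
  mul_mem (mul_mem (mul_mem (mul_mem (mul_mem (mul_mem (mul_mem (mul_mem (mul_mem (hb) hb) ha) hb) ha) hb) hb) hb) ha) hb,
  mul_mem (mul_mem (mul_mem (mul_mem (mul_mem (mul_mem (mul_mem (mul_mem (mul_mem (hb) hb) ha) hb) hb) hb) ha) hb) hb) hb,
  mul_mem (mul_mem (mul_mem (mul_mem (mul_mem (mul_mem (mul_mem (mul_mem (mul_mem (hb) hb) hb) ha) hb) ha) hb) hb) hb) ha,
  mul_mem (mul_mem (mul_mem (mul_mem (mul_mem (mul_mem (mul_mem (mul_mem (mul_mem (hb) hb) hb) ha) hb) ha) hb) hb) hb) hb,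
  mul_mem (mul_mem (mul_mem (mul_mem (mul_mem (mul_mem (mul_mem (mul_mem (mul_mem (hb) hb) hb) ha) hb) hb) hb) ha) hb) hb,
  mul_mem (mul_mem (mul_mem (mul_mem (mul_mem (mul_mem (mul_mem (mul_mem (mul_mem (hb) hb) hb) hb) ha) hb) ha) hb) hb) hb,
  mul_mem (mul_mem (mul_mem (mul_mem (mul_mem (mul_mem (mul_mem (mul_mem (mul_mem (mul_mem (ha) hb) ha) hb) hb) hb) ha) hb) hb) hb) ha,
  mul_mem (mul_mem (mul_mem (mul_mem (mul_mem (mul_mem (mul_mem (mul_mem (mul_mem (mul_mem (ha) hb) hb) ha) hb) ha) hb) hb) hb) ha) hb,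
  mul_mem (mul_mem (mul_mem (mul_mem (mul_mem (mul_mem (mul_mem (mul_mem (mul_mem (mul_mem (ha) hb) hb) hb) ha) hb) ha) hb) hb) hb) ha,
  mul_mem (mul_mem (mul_mem (mul_mem (mul_mem (mul_mem (mul_mem (mul_mem (mul_mem (mul_mem (ha) hb) hb) hb) ha) hb) ha) hb) hb) hb) hb,
  mul_mem (mul_mem (mul_mem (mul_mem (mul_mem (mul_mem (mul_mem (mul_mem (mul_mem (mul_mem (ha) hb) hb) hb) ha) hb) hb) hb) ha) hb) hb,
  mul_mem (mul_mem (mul_mem (mul_mem (mul_mem (mul_mem (mul_mem (mul_mem (mul_mem (mul_mem (hb) hb) ha) hb) hb) hb) ha) hb) hb) hb) ha,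
  mul_mem (mul_mem (mul_mem (mul_mem (mul_mem (mul_mem (mul_mem (mul_mem (mul_mem (mul_mem (hb) hb) hb) ha) hb) hb) hb) ha) hb) hb) hb,
  mul_mem (mul_mem (mul_mem (mul_mem (mul_mem (mul_mem (mul_mem (mul_mem (mul_mem (mul_mem (hb) hb) hb) hb) ha) hb) ha) hb) hb) hb) ha,
  mul_mem (mul_mem (mul_mem (mul_mem (mul_mem (mul_mem (mul_mem (mul_mem (mul_mem (mul_mem (mul_mem (ha) hb) hb) hb) ha) hb) hb) hb) ha) hb) hb) hb]

lemma pair : ∀ x y : Fin 6, ∃ g ∈ L, g x = y := by decide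

lemma map012 : ∀ x y z : Fin 6, x ≠ y → x ≠ z → y ≠ z →
    ∃ g ∈ L, g 0 = x ∧ g 1 = y ∧ g 2 = z := by decide

/-- `H = ⟨(1,4)(3,5), (1,4,6,2,5,3)⟩ ≤ S₆` has order 120, is
isomorphic to `S₅`, and acts transitively (indeed 3-transitively) on the six
points. -/
theorem H120_props :
    Nat.card H120 = 120 ∧
    Nonempty (H120 ≃* Equiv.Perm (Fin 5)) ∧
    (∀ x y : Fin 6, ∃ g ∈ H120, g x = y) ∧
    (∀ a b c a' b' c' : Fin 6,
      a ≠ b → a ≠ c → b ≠ c → a' ≠ b' → a' ≠ c' → b' ≠ c' →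
      ∃ g ∈ H120, g a = a' ∧ g b = b' ∧ g c = c') := by
  have iso : H120 ≃* Equiv.Perm (Fin 5) := MulEquiv.ofBijective rho ⟨rho_inj, rho_surj⟩
  refine ⟨?_, ⟨iso⟩, ?_, ?_⟩
  · rw [Nat.card_congr iso.toEquiv, Nat.card_eq_fintype_card, Fintype.card_perm,
      Fintype.card_fin]
    rfl
  · intro x y
    obtain ⟨g, hgL, hgxy⟩ := pair x y
    exact ⟨g, L_mem g hgL, hgxy⟩
  · intro a b c a' b' c' h1 h2 h3 h4 h5 h6
    obtain ⟨g1, hg1, e1, e2, e3⟩ := map012 a b c h1 h2 h3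
    obtain ⟨g2, hg2, f1, f2, f3⟩ := map012 a' b' c' h4 h5 h6
    refine ⟨g2 * g1⁻¹, mul_mem (L_mem g2 hg2) (inv_mem (L_mem g1 hg1)), ?_, ?_, ?_⟩
    · rw [← e1, ← f1]; simp [Equiv.Perm.mul_apply]
    · rw [← e2, ← f2]; simp [Equiv.Perm.mul_apply]
    · rw [← e3, ← f3]; simp [Equiv.Perm.mul_apply]
end

section
/- If Γ is a Schur ring over a finite group G (with principal sets Γ_1,...,Γ_m partitioning G), C ⊆ G satisfies that the sum of elements of C lies in the span of the Γ̄_i, and x = Σ_{g∈G} λ_g g lies in the Schur ring, then for every scalar λ, the element Σ_{g ∈ C, λ_g = λ} g also lies in the Schur ring (Schur–Wielandt principle). -/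
open scoped Classical

noncomputable section

/-- The "simple quantity" `P̄ = Σ_{g ∈ P} g` in the group algebra `ℂ[G]`. -/
def simpleQuantity (G : Type*) [Group G] (P : Finset G) : MonoidAlgebra ℂ G :=
  ∑ g ∈ P, MonoidAlgebra.of ℂ G g

/-- A Schur ring over a finite group `G`: a partition of `G` into principal sets
`Γ₁, …, Γₘ` with `Γ₁ = {1}`, closed under inversion, whose simple quantities
multiply with nonnegative integer structure constants. -/
structure SchurRing (G : Type*) [Group G] [Fintype G] [DecidableEq G] where
  parts : Finset (Finset G)
  partition : ∀ g : G, ∃! P, P ∈ parts ∧ g ∈ P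
  one_mem : ({1} : Finset G) ∈ parts
  inv_mem : ∀ P ∈ parts, P.image (·⁻¹) ∈ parts
  structure_consts : ∀ P ∈ parts, ∀ Q ∈ parts, ∃ lam : Finset G → ℕ,
    simpleQuantity G P * simpleQuantity G Q =
      ∑ R ∈ parts, (lam R : ℂ) • simpleQuantity G R

/-- The span of the simple quantities of a Schur ring, as a subspace of `ℂ[G]`. -/
def SchurRing.carrier {G : Type*} [Group G] [Fintype G] [DecidableEq G]
    (S : SchurRing G) : Submodule ℂ (MonoidAlgebra ℂ G) :=
  Submodule.span ℂ ((fun P => simpleQuantity G P) '' S.parts)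

/-! Every element of the Schur ring has its coefficients constant on each principal set.
The coefficients of `C̄` are `0` and `1`, so `C` is a union of principal sets, and so is its
intersection with a level set of the coefficients of `x`; the simple quantity of a union of
principal sets is the sum of theirs, hence lies in the Schur ring. -/

lemma simpleQuantity_coeff {G : Type*} [Group G] [DecidableEq G] (P : Finset G) (g : G) :
    (simpleQuantity G P).coeff g = if g ∈ P then 1 else 0 := by
  rw [simpleQuantity, MonoidAlgebra.coeff_sum, Finset.sum_apply']
  simp [MonoidAlgebra.of_apply, MonoidAlgebra.coeff_single, Finsupp.single_apply]

lemma simpleQuantity_biUnion {G ι : Type*} [Group G] [DecidableEq G] {s : Finset ι}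
    {f : ι → Finset G} (hf : (s : Set ι).PairwiseDisjoint f) :
    simpleQuantity G (s.biUnion f) = ∑ i ∈ s, simpleQuantity G (f i) :=
  Finset.sum_biUnion hf

namespace SchurRing

variable {G : Type*} [Group G] [Fintype G] [DecidableEq G] (S : SchurRing G)

lemma eq_of_mem_of_mem {P Q : Finset G} (hP : P ∈ S.parts) (hQ : Q ∈ S.parts) {g : G}
    (hgP : g ∈ P) (hgQ : g ∈ Q) : P = Q :=
  (S.partition g).unique ⟨hP, hgP⟩ ⟨hQ, hgQ⟩

lemma pairwiseDisjoint_parts : (S.parts : Set (Finset G)).PairwiseDisjoint id :=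
  fun _ hP _ hQ hne => Finset.disjoint_left.2 fun _ hgP hgQ =>
    hne (S.eq_of_mem_of_mem hP hQ hgP hgQ)

lemma simpleQuantity_mem_carrier {P : Finset G} (hP : P ∈ S.parts) :
    simpleQuantity G P ∈ S.carrier :=
  Submodule.subset_span ⟨P, hP, rfl⟩

lemma coeff_eq_of_mem_carrier {y : MonoidAlgebra ℂ G} (hy : y ∈ S.carrier) {P : Finset G}
    (hP : P ∈ S.parts) {g h : G} (hg : g ∈ P) (hh : h ∈ P) : y.coeff g = y.coeff h := by
  induction hy using Submodule.span_induction with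
  | mem z hz =>
    obtain ⟨Q, hQ, rfl⟩ := hz
    have hgh : g ∈ Q ↔ h ∈ Q :=
      ⟨fun hgQ => S.eq_of_mem_of_mem hP hQ hg hgQ ▸ hh,
        fun hhQ => S.eq_of_mem_of_mem hP hQ hh hhQ ▸ hg⟩
    simp only [simpleQuantity_coeff, hgh]
  | zero => simp
  | add a b _ _ ha hb => simp only [MonoidAlgebra.coeff_add, Finsupp.add_apply, ha, hb]
  | smul c a _ ha => simp only [MonoidAlgebra.coeff_smul, Finsupp.smul_apply, ha]

lemma mem_iff_of_simpleQuantity_mem_carrier {C : Finset G} (hC : simpleQuantity G C ∈ S.carrier)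
    {P : Finset G} (hP : P ∈ S.parts) {g h : G} (hg : g ∈ P) (hh : h ∈ P) : g ∈ C ↔ h ∈ C := by
  have hcoeff := S.coeff_eq_of_mem_carrier hC hP hg hh
  simp only [simpleQuantity_coeff] at hcoeff
  split_ifs at hcoeff <;> simp_all

lemma biUnion_filter_parts_subset {D : Finset G}
    (hD : ∀ P ∈ S.parts, ∀ g ∈ P, ∀ h ∈ P, g ∈ D → h ∈ D) :
    (S.parts.filter (· ⊆ D)).biUnion id = D := by
  ext g
  simp only [Finset.mem_biUnion, Finset.mem_filter, id]
  constructor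
  · rintro ⟨P, ⟨-, hPD⟩, hgP⟩
    exact hPD hgP
  · intro hgD
    obtain ⟨P, ⟨hP, hgP⟩, -⟩ := S.partition g
    exact ⟨P, ⟨hP, fun h hh => hD P hP g hgP h hh hgD⟩, hgP⟩

lemma simpleQuantity_mem_carrier_of_saturated {D : Finset G}
    (hD : ∀ P ∈ S.parts, ∀ g ∈ P, ∀ h ∈ P, g ∈ D → h ∈ D) :
    simpleQuantity G D ∈ S.carrier := by
  rw [← S.biUnion_filter_parts_subset hD,
    simpleQuantity_biUnion (S.pairwiseDisjoint_parts.subset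
      (Finset.coe_subset.2 (Finset.filter_subset _ _)))]
  exact Submodule.sum_mem _ fun P hP => S.simpleQuantity_mem_carrier (Finset.mem_filter.1 hP).1

end SchurRing

/-- Schur–Wielandt principle: if `S` is a Schur ring over a finite
group `G`, `C ⊆ G` has its simple quantity `C̄` in `S`, and
`x = Σ_{g ∈ G} λ_g g` lies in `S`, then for every scalar `λ` the element
`Σ_{g ∈ C, λ_g = λ} g` also lies in `S`. -/
theorem schur_wielandt {G : Type*} [Group G] [Fintype G] [DecidableEq G]
    (S : SchurRing G) (C : Finset G)
    (hC : simpleQuantity G C ∈ S.carrier)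
    (x : MonoidAlgebra ℂ G) (hx : x ∈ S.carrier) (lam : ℂ) :
    simpleQuantity G (C.filter (fun g => x.coeff g = lam)) ∈ S.carrier := by
  refine S.simpleQuantity_mem_carrier_of_saturated fun P hP g hgP h hhP hg => ?_
  obtain ⟨hgC, hgx⟩ := Finset.mem_filter.1 hg
  exact Finset.mem_filter.2
    ⟨(S.mem_iff_of_simpleQuantity_mem_carrier hC hP hgP hhP).1 hgC,
      (S.coeff_eq_of_mem_carrier hx hP hhP hgP).trans hgx⟩
end
end
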